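/- arXiv:1412.4617 — 4 statements merged into one kernel-verified Lean document; each statement's English description precedes it below -/
import Mathlib

section
/- Let a = (a_1, ..., a_n) ∈ ℝ^n be a unit vector (a ∈ S^{n-1}), set a_0 := 0, and assume a_i ≠ a_j for every pair of distinct indices i, j ∈ {0, 1, ..., n}. Then for every t ∈ ℝ, the n-dimensional Lebesgue volume of the section Θ(a,t) := Δ ∩ {x ∈ ℝ^n : ⟨a, x⟩ ≤ t} equals (1/n!) · Σ_{i=0}^{n} (t - a_i)_+^n / ∏_{j ≠ i, 0 ≤ j ≤ n} (a_j - a_i). -/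
/-!
Generalize to arbitrary pairwise distinct nodes `A₀, …, Aₙ` and the constraint
`∑ᵢ Aᵢ xᵢ ≤ t` in barycentric coordinates, and induct on `n`. Fixing the last coordinate
`xₙ = s ∈ [0, 1)` leaves the `(1 - s)`-dilate of the `(n-1)`-dimensional section with nodes
`A₀, …, Aₙ₋₁` and threshold `(t - Aₙ s) / (1 - s)`, so by induction its volume is a combination
of truncated powers `(t - Aᵢ - (Aₙ - Aᵢ) s)₊ⁿ⁻¹`. Integrating over `s` raises the exponent, and
the identity `∑ᵢ 1 / ∏_{j ≠ i} (Aⱼ - Aᵢ) = 0` turns the result into the formula for `n + 1`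
nodes; this is the recursion of divided differences.
-/

open MeasureTheory Finset

/-- `x₊ⁿ`, except that `x₊⁰` is the indicator of `0 ≤ x` rather than `max x 0 ^ 0 = 1`: with
this convention the volume formula also holds for `n = 0`, where the induction starts. -/
noncomputable def truncPow (n : ℕ) (x : ℝ) : ℝ := if 0 ≤ x then x ^ n else 0

lemma truncPow_nonneg (n : ℕ) (x : ℝ) : 0 ≤ truncPow n x := by
  unfold truncPow
  split_ifs with h
  · exact pow_nonneg h n
  · exact le_rfl

lemma monotone_truncPow (n : ℕ) : Monotone (truncPow n) := by
  intro x y hxy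
  by_cases hx : 0 ≤ x
  · simp only [truncPow, hx, hx.trans hxy, if_true]
    exact pow_le_pow_left₀ hx hxy n
  · simp only [truncPow, hx, if_false]
    exact truncPow_nonneg n y

lemma truncPow_eq_max_pow {n : ℕ} (hn : n ≠ 0) (x : ℝ) : truncPow n x = max x 0 ^ n := by
  rcases le_total 0 x with hx | hx
  · simp [truncPow, hx]
  · rcases hx.eq_or_lt with rfl | hx
    · simp [truncPow, hn]
    · simp [truncPow, hx.not_ge, hx.le, hn]

lemma truncPow_mul_of_pos {c : ℝ} (hc : 0 < c) (n : ℕ) (x : ℝ) :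
    truncPow n (c * x) = c ^ n * truncPow n x := by
  simp only [truncPow, mul_nonneg_iff_of_pos_left hc]
  split_ifs <;> simp [mul_pow]

lemma hasDerivWithinAt_truncPow_succ (n : ℕ) (x : ℝ) :
    HasDerivWithinAt (truncPow (n + 1)) ((n + 1) * truncPow n x) (Set.Ioi x) x := by
  by_cases hx : 0 ≤ x
  · have hpow : HasDerivWithinAt (· ^ (n + 1)) ((n + 1) * x ^ n) (Set.Ioi x) x := by
      simpa using (hasDerivAt_pow (n + 1) x).hasDerivWithinAt
    rw [truncPow, if_pos hx]
    exact hpow.congr (fun y hy => if_pos (hx.trans (le_of_lt hy))) (if_pos hx)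
  · rw [truncPow, if_neg hx, mul_zero]
    refine (hasDerivWithinAt_const x _ 0).congr_of_eventuallyEq ?_ (if_neg hx)
    filter_upwards [nhdsWithin_le_nhds (eventually_lt_nhds (not_le.mp hx))] with y hy
    exact if_neg (not_le.mpr hy)

lemma integral_truncPow (n : ℕ) (a b : ℝ) :
    ∫ x in a..b, truncPow n x = (truncPow (n + 1) b - truncPow (n + 1) a) / (n + 1) := by
  have hcont : Continuous (truncPow (n + 1)) := by
    simp_rw [funext (truncPow_eq_max_pow n.succ_ne_zero)]
    fun_prop
  rw [eq_div_iff (by positivity), ← intervalIntegral.integral_mul_const,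
    ← intervalIntegral.integral_eq_sub_of_hasDeriv_right hcont.continuousOn
      (fun x _ => hasDerivWithinAt_truncPow_succ n x)
      ((monotone_truncPow n).intervalIntegrable.const_mul _)]
  simp_rw [mul_comm]

lemma integral_truncPow_sub_mul (n : ℕ) (c : ℝ) {d : ℝ} (hd : d ≠ 0) :
    ∫ s in (0 : ℝ)..1, truncPow n (c - d * s) =
      (truncPow (n + 1) c - truncPow (n + 1) (c - d)) / ((n + 1) * d) := by
  rw [intervalIntegral.integral_comp_sub_mul _ hd, integral_truncPow, smul_eq_mul, mul_zero,
    sub_zero, mul_one]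
  field_simp

lemma intervalIntegrable_truncPow_sub_mul (n : ℕ) (c d a b : ℝ) :
    IntervalIntegrable (fun s => truncPow n (c - d * s)) volume a b := by
  rcases le_total 0 d with hd | hd
  · exact ((monotone_truncPow n).comp_antitone fun x y hxy => by nlinarith).intervalIntegrable
  · exact ((monotone_truncPow n).comp fun x y hxy => by nlinarith).intervalIntegrable

section DividedDifference

variable {ι F : Type*} [DecidableEq ι] [Field F]

theorem sum_inv_prod_erase_sub_eq_zero {s : Finset ι} {v : ι → F} (hv : Set.InjOn v s)
    (hs : 1 < #s) : ∑ i ∈ s, (∏ j ∈ s.erase i, (v j - v i))⁻¹ = 0 := by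
  have hv' : Set.InjOn (fun i => -v i) s := fun i hi j hj h => hv hi hj (neg_inj.mp h)
  -- the coefficient of `X ^ (#s - 1)` in the interpolant of `1` at the nodes `-vᵢ`
  have h := Lagrange.coeff_eq_sum hv' (P := 1)
    (by rw [Polynomial.degree_one]; exact_mod_cast (zero_lt_one.trans hs))
  rw [Polynomial.coeff_one, if_neg (by omega)] at h
  simpa [neg_add_eq_sub, div_eq_inv_mul] using h.symm

theorem sum_insert_div_prod_erase_sub {s : Finset ι} {k : ι} (hk : k ∉ s) (hs : s.Nonempty)
    {v : ι → F} (hv : Set.InjOn v (insert k s : Finset ι)) (f : ι → F) :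
    ∑ i ∈ insert k s, f i / ∏ j ∈ (insert k s).erase i, (v j - v i) =
      ∑ i ∈ s, (f i - f k) / (v k - v i) / ∏ j ∈ s.erase i, (v j - v i) := by
  have hprod : ∀ i ∈ s, ∏ j ∈ (insert k s).erase i, (v j - v i) =
      (v k - v i) * ∏ j ∈ s.erase i, (v j - v i) := fun i hi => by
    rw [erase_insert_of_ne (ne_of_mem_of_not_mem hi hk).symm,
      prod_insert fun h => hk (mem_of_mem_erase h)]
  have hsum := sum_inv_prod_erase_sub_eq_zero hv
    (by rw [card_insert_of_notMem hk]; exact Nat.succ_lt_succ hs.card_pos)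
  rw [sum_insert hk, erase_insert hk] at hsum ⊢
  rw [sum_congr rfl fun i hi => by rw [hprod i hi]] at hsum ⊢
  rw [div_eq_mul_inv (f k), eq_neg_of_add_eq_zero_left hsum, mul_neg, mul_sum,
    ← sum_neg_distrib, ← sum_add_distrib]
  refine sum_congr rfl fun i _ => ?_
  simp only [div_eq_mul_inv, mul_inv]
  ring

theorem Fin.sum_div_prod_erase_sub_eq_sum_castSucc {n : ℕ} {v : Fin (n + 2) → F}
    (hv : Function.Injective v) (f : Fin (n + 2) → F) :
    ∑ i, f i / ∏ j ∈ univ.erase i, (v j - v i) =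
      ∑ i : Fin (n + 1), (f i.castSucc - f (Fin.last _)) / (v (Fin.last _) - v i.castSucc) /
        ∏ j ∈ univ.erase i, (v j.castSucc - v i.castSucc) := by
  rw [Fin.univ_castSuccEmb, cons_eq_insert,
    sum_insert_div_prod_erase_sub (by simp) univ_nonempty.map hv.injOn f, sum_map]
  refine sum_congr rfl fun i _ => ?_
  rw [← Fin.castSuccEmb_apply, ← map_erase, prod_map]
  rfl

end DividedDifference

theorem volume_eq_lintegral_volume_snoc {n : ℕ} {S : Set (Fin (n + 1) → ℝ)}
    (hS : MeasurableSet S) :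
    volume S = ∫⁻ s, volume {y : Fin n → ℝ | Fin.snoc y s ∈ S} := by
  have hmp := (volume_preserving_piFinSuccAbove (fun _ : Fin (n + 1) => ℝ) (Fin.last n)).symm
  rw [← hmp.measure_preimage hS.nullMeasurableSet, Measure.volume_eq_prod,
    Measure.prod_apply (hmp.measurable hS)]
  refine lintegral_congr fun s => congrArg volume ?_
  ext y
  simp [Fin.snocEquiv]

/-- The simplex is parametrised by `x₁, …, xₙ`, with `x₀ = 1 - ∑ xᵢ`; the constraint is
`∑_{i=0}^n Aᵢ xᵢ ≤ t`. -/
def simplexSection {n : ℕ} (A : Fin (n + 1) → ℝ) (t : ℝ) : Set (Fin n → ℝ) :=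
  {x | (∀ i, 0 ≤ x i) ∧ ∑ i, x i ≤ 1 ∧ A 0 * (1 - ∑ i, x i) + ∑ i, A i.succ * x i ≤ t}

section SimplexSection

variable {n : ℕ}

theorem isClosed_simplexSection (A : Fin (n + 1) → ℝ) (t : ℝ) :
    IsClosed (simplexSection A t) := by
  simp only [simplexSection, Set.ofPred_and, Set.ofPred_forall]
  exact (isClosed_iInter fun i => isClosed_le continuous_const (continuous_apply i)).inter
    ((isClosed_le (by fun_prop) continuous_const).inter
      (isClosed_le (by fun_prop) continuous_const))

theorem volume_simplexSection_ne_top (A : Fin (n + 1) → ℝ) (t : ℝ) :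
    volume (simplexSection A t) ≠ ⊤ := by
  refine ((Metric.isBounded_Icc (0 : Fin n → ℝ) 1).subset ?_).measure_lt_top.ne
  rintro x ⟨hx0, hx1, -⟩
  exact ⟨hx0, fun i => (single_le_sum (fun j _ => hx0 j) (mem_univ i)).trans hx1⟩

theorem inv_smul_mem_simplexSection_iff {c : ℝ} (hc : 0 < c) (A : Fin (n + 1) → ℝ) (t : ℝ)
    (y : Fin n → ℝ) :
    c⁻¹ • y ∈ simplexSection A t ↔
      (∀ i, 0 ≤ y i) ∧ ∑ i, y i ≤ c ∧
        A 0 * (c - ∑ i, y i) + ∑ i, A i.succ * y i ≤ c * t := by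
  simp only [simplexSection, Set.mem_ofPred_eq, Pi.smul_apply, smul_eq_mul,
    mul_nonneg_iff_of_pos_left (inv_pos.mpr hc), ← mul_sum, mul_left_comm _ c⁻¹,
    inv_mul_le_iff₀ hc, mul_one]
  rw [← inv_mul_le_iff₀ hc]
  convert Iff.rfl using 2
  field_simp

theorem snoc_mem_simplexSection_iff (A : Fin (n + 2) → ℝ) (t : ℝ) (y : Fin n → ℝ) (s : ℝ) :
    Fin.snoc y s ∈ simplexSection A t ↔
      0 ≤ s ∧ (∀ i, 0 ≤ y i) ∧ ∑ i, y i ≤ 1 - s ∧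
        A 0 * (1 - s - ∑ i, y i) + ∑ i, A i.succ.castSucc * y i ≤ t - A (Fin.last _) * s := by
  simp only [simplexSection, Set.mem_ofPred_eq, Fin.forall_fin_succ', Fin.sum_univ_castSucc,
    Fin.snoc_castSucc, Fin.snoc_last, Fin.succ_castSucc, Fin.succ_last]
  constructor
  · rintro ⟨⟨hy, hs⟩, hsum, ht⟩
    exact ⟨hs, hy, by linarith, by linarith⟩
  · rintro ⟨hs, hy, hsum, ht⟩
    exact ⟨⟨hy, hs⟩, by linarith, by linarith⟩

theorem snoc_preimage_simplexSection {A : Fin (n + 2) → ℝ} {t s : ℝ} (hs0 : 0 ≤ s)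
    (hs1 : s < 1) :
    {y : Fin n → ℝ | Fin.snoc y s ∈ simplexSection A t} =
      ((1 - s)⁻¹ • ·) ⁻¹'
        simplexSection (fun j => A j.castSucc) ((t - A (Fin.last _) * s) / (1 - s)) := by
  have hc : 0 < 1 - s := sub_pos.mpr hs1
  ext y
  rw [Set.mem_ofPred_eq, snoc_mem_simplexSection_iff, Set.mem_preimage,
    inv_smul_mem_simplexSection_iff hc, mul_div_cancel₀ _ hc.ne']
  simp [hs0]

theorem snoc_preimage_simplexSection_eq_empty {A : Fin (n + 2) → ℝ} {t s : ℝ}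
    (hs : s ∉ Set.Icc 0 1) : {y : Fin n → ℝ | Fin.snoc y s ∈ simplexSection A t} = ∅ := by
  refine Set.eq_empty_of_forall_notMem fun y hmem => hs ?_
  obtain ⟨hs0, hy, hsum, -⟩ := (snoc_mem_simplexSection_iff A t y s).mp hmem
  refine ⟨hs0, ?_⟩
  linarith [sum_nonneg fun i (_ : i ∈ univ) => hy i]

theorem volume_snoc_preimage_simplexSection (A : Fin (n + 2) → ℝ) (t : ℝ) {s : ℝ}
    (hs0 : 0 ≤ s) (hs1 : s < 1) :
    volume {y : Fin n → ℝ | Fin.snoc y s ∈ simplexSection A t} =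
      ENNReal.ofReal ((1 - s) ^ n) *
        volume (simplexSection (fun j => A j.castSucc) ((t - A (Fin.last _) * s) / (1 - s))) := by
  have hc : 0 < 1 - s := sub_pos.mpr hs1
  rw [snoc_preimage_simplexSection hs0 hs1, Measure.addHaar_preimage_smul _ (inv_ne_zero hc.ne'),
    Module.finrank_fin_fun, inv_pow, inv_inv, abs_of_pos (pow_pos hc n)]

end SimplexSection

noncomputable def simplexSectionFormula {n : ℕ} (A : Fin (n + 1) → ℝ) (t : ℝ) : ℝ :=
  (1 / n.factorial) * ∑ i, truncPow n (t - A i) / ∏ j ∈ univ.erase i, (A j - A i)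

theorem pow_mul_simplexSectionFormula_castSucc {n : ℕ} (A : Fin (n + 2) → ℝ) (t : ℝ) {s : ℝ}
    (hs : s < 1) :
    (1 - s) ^ n *
        simplexSectionFormula (fun j => A j.castSucc) ((t - A (Fin.last _) * s) / (1 - s)) =
      (1 / n.factorial) * ∑ i : Fin (n + 1),
        truncPow n ((t - A i.castSucc) - (A (Fin.last _) - A i.castSucc) * s) /
          ∏ j ∈ univ.erase i, (A j.castSucc - A i.castSucc) := by
  have hc : 0 < 1 - s := sub_pos.mpr hs
  rw [simplexSectionFormula, mul_left_comm, mul_sum]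
  congr 1
  refine sum_congr rfl fun i _ => ?_
  rw [← mul_div_assoc, ← truncPow_mul_of_pos hc]
  congr 2
  field_simp
  ring

theorem integral_simplexSectionFormula_slice {n : ℕ} {A : Fin (n + 2) → ℝ}
    (hA : Function.Injective A) (t : ℝ) :
    ∫ s in (0 : ℝ)..1, (1 / n.factorial) * ∑ i : Fin (n + 1),
        truncPow n ((t - A i.castSucc) - (A (Fin.last _) - A i.castSucc) * s) /
          ∏ j ∈ univ.erase i, (A j.castSucc - A i.castSucc) =
      simplexSectionFormula A t := by
  rw [intervalIntegral.integral_const_mul, intervalIntegral.integral_finsetSum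
      fun i _ => (intervalIntegrable_truncPow_sub_mul n _ _ 0 1).div_const _,
    simplexSectionFormula, Fin.sum_div_prod_erase_sub_eq_sum_castSucc hA, mul_sum, mul_sum]
  refine sum_congr rfl fun i _ => ?_
  have hd : A (Fin.last _) - A i.castSucc ≠ 0 :=
    sub_ne_zero.mpr (hA.ne (Fin.castSucc_lt_last i).ne')
  rw [intervalIntegral.integral_div, integral_truncPow_sub_mul _ _ hd, sub_sub_sub_cancel_right,
    Nat.factorial_succ]
  push_cast
  field_simp

theorem toReal_volume_simplexSection_zero (A : Fin 1 → ℝ) (t : ℝ) :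
    (volume (simplexSection A t)).toReal = simplexSectionFormula A t := by
  by_cases h : A 0 ≤ t
  · have : simplexSection A t = Set.univ := by ext x; simp [simplexSection, h]
    simp [this, simplexSectionFormula, truncPow, h, volume_pi]
  · have : simplexSection A t = ∅ := by ext x; simp [simplexSection, h]
    simp [this, simplexSectionFormula, truncPow, h]

theorem toReal_volume_simplexSection_succ {n : ℕ} {A : Fin (n + 2) → ℝ}
    (hA : Function.Injective A)
    (ih : ∀ t, (volume (simplexSection (fun j => A j.castSucc) t)).toReal =
      simplexSectionFormula (fun j => A j.castSucc) t) (t : ℝ) :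
    (volume (simplexSection A t)).toReal = simplexSectionFormula A t := by
  set G : ℝ → ℝ := fun s => (1 / n.factorial) * ∑ i : Fin (n + 1),
    truncPow n ((t - A i.castSucc) - (A (Fin.last _) - A i.castSucc) * s) /
      ∏ j ∈ univ.erase i, (A j.castSucc - A i.castSucc)
  have hslice : ∀ s ∈ Set.Ico (0 : ℝ) 1,
      volume {y | Fin.snoc y s ∈ simplexSection A t} = ENNReal.ofReal (G s) ∧ 0 ≤ G s := by
    rintro s ⟨hs0, hs1⟩
    have hGs : G s = (1 - s) ^ n * (volume (simplexSection (fun j => A j.castSucc)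
        ((t - A (Fin.last _) * s) / (1 - s)))).toReal := by
      rw [ih]
      exact (pow_mul_simplexSectionFormula_castSucc A t hs1).symm
    have hpow : 0 ≤ (1 - s) ^ n := pow_nonneg (sub_pos.mpr hs1).le n
    refine ⟨?_, hGs ▸ mul_nonneg hpow ENNReal.toReal_nonneg⟩
    rw [hGs, ENNReal.ofReal_mul hpow, ENNReal.ofReal_toReal (volume_simplexSection_ne_top _ _),
      volume_snoc_preimage_simplexSection A t hs0 hs1]
  -- only almost everywhere: for `n = 0` the slice at `s = 1` is a point of volume one
  have hvol : volume (simplexSection A t) = ∫⁻ s in Set.Ico 0 1, ENNReal.ofReal (G s) := by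
    rw [volume_eq_lintegral_volume_snoc (isClosed_simplexSection A t).measurableSet,
      ← lintegral_indicator measurableSet_Ico]
    refine lintegral_congr_ae ((Measure.ae_ne volume 1).mono fun s hs1 => ?_)
    dsimp only
    by_cases hs : s ∈ Set.Ico (0 : ℝ) 1
    · rw [Set.indicator_of_mem hs, (hslice s hs).1]
    · rw [Set.indicator_of_notMem hs, snoc_preimage_simplexSection_eq_empty, measure_empty]
      exact fun h => hs ⟨h.1, lt_of_le_of_ne h.2 hs1⟩
  have hmeas : Measurable G := by
    have := (monotone_truncPow n).measurable
    fun_prop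
  rw [hvol, ← integral_eq_lintegral_of_nonneg_ae
      ((ae_restrict_iff' measurableSet_Ico).mpr (ae_of_all _ fun s hs => (hslice s hs).2))
      hmeas.aestronglyMeasurable,
    integral_Ico_eq_integral_Ioo, ← integral_Ioc_eq_integral_Ioo,
    ← intervalIntegral.integral_of_le zero_le_one, integral_simplexSectionFormula_slice hA]

theorem toReal_volume_simplexSection :
    ∀ {n : ℕ} {A : Fin (n + 1) → ℝ}, Function.Injective A → ∀ t : ℝ,
      (volume (simplexSection A t)).toReal = simplexSectionFormula A t
  | 0, A, _, t => toReal_volume_simplexSection_zero A t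
  | _ + 1, _, hA, t => toReal_volume_simplexSection_succ hA
      (toReal_volume_simplexSection (hA.comp (Fin.castSucc_injective _))) t

/-- Volume of the section `Θ(a,t) = Δ ∩ {x : ⟨a,x⟩ ≤ t}` of the canonical simplex,
for a unit vector `a` such that `a₀ := 0, a₁, …, aₙ` are pairwise distinct. -/
theorem volume_simplex_section (n : ℕ) (a : Fin n → ℝ)
    (ha : ∑ i, a i ^ 2 = 1)
    (A : Fin (n + 1) → ℝ) (hA : A = Fin.cons 0 a)
    (hdist : ∀ i j : Fin (n + 1), i ≠ j → A i ≠ A j) (t : ℝ) :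
    (volume {x : Fin n → ℝ |
        ((∀ i, 0 ≤ x i) ∧ ∑ i, x i ≤ 1) ∧ ∑ i, a i * x i ≤ t}).toReal =
      (1 / n.factorial) *
        ∑ i : Fin (n + 1),
          max (t - A i) 0 ^ n / ∏ j ∈ univ.erase i, (A j - A i) := by
  have hn : n ≠ 0 := by
    rintro rfl
    simp at ha
  have hset : {x : Fin n → ℝ | ((∀ i, 0 ≤ x i) ∧ ∑ i, x i ≤ 1) ∧ ∑ i, a i * x i ≤ t} =
      simplexSection A t := by
    ext x
    simp [simplexSection, hA, and_assoc]
  rw [hset, toReal_volume_simplexSection (fun i j => not_imp_not.mp (hdist i j)),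
    simplexSectionFormula]
  simp_rw [truncPow_eq_max_pow hn]
end

section
/- Let a = (a_1, ..., a_n) ∈ ℝ^n with a_i > 0 for all i, and let f(t) denote the n-dimensional Lebesgue volume of B_a(t) := {x ∈ [0,1]^n : ⟨a, x⟩ ≤ t} for t ≥ 0. Then for every real λ > 0, ∫_0^∞ exp(-λ t) f(t) dt = ∏_{i=1}^n (1 - exp(-λ a_i)) / (λ^{n+1} ∏_{i=1}^n a_i). -/
/-!
By Tonelli, `∫₀^∞ e^{-λt} vol{x ∈ [0,1]ⁿ : ⟨a,x⟩ ≤ t} dt = ∫_{[0,1]ⁿ} ∫_{⟨a,x⟩}^∞ e^{-λt} dt dx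
= λ⁻¹ ∫_{[0,1]ⁿ} e^{-λ⟨a,x⟩} dx`, and the last integrand is a product of functions of the
single coordinates, so the integral is `∏ᵢ (1 - e^{-λaᵢ}) / (λaᵢ)`.
-/

open MeasureTheory Finset Real

theorem lintegral_Ioi_exp_neg_mul {l : ℝ} (hl : 0 < l) (c : ℝ) :
    ∫⁻ t in Set.Ioi c, ENNReal.ofReal (exp (-(l * t))) = ENNReal.ofReal (exp (-(l * c)) / l) := by
  have hint : IntegrableOn (fun t => exp (-(l * t))) (Set.Ioi c) := by
    simpa only [neg_mul] using exp_neg_integrableOn_Ioi c hl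
  rw [← ofReal_integral_eq_lintegral_ofReal hint (ae_of_all _ fun t => (exp_pos _).le)]
  simp_rw [← neg_mul]
  rw [integral_exp_mul_Ioi (neg_neg_of_pos hl), div_neg, neg_div, neg_neg, neg_mul]

section Laplace

variable {X : Type*} [MeasurableSpace X] {μ : Measure X} {g : X → ℝ} {l : ℝ}

theorem lintegral_Ioi_exp_neg_mul_mul_measure_le [SFinite μ] (hg : Measurable g)
    (hg0 : ∀ᵐ x ∂μ, 0 ≤ g x) (hl : 0 < l) :
    ∫⁻ t in Set.Ioi 0, ENNReal.ofReal (exp (-(l * t))) * μ {x | g x ≤ t} =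
      ∫⁻ x, ENNReal.ofReal (exp (-(l * g x)) / l) ∂μ := by
  set F : ℝ → ENNReal := fun t => ENNReal.ofReal (exp (-(l * t)))
  have hF : Measurable F := by fun_prop
  calc ∫⁻ t in Set.Ioi 0, F t * μ {x | g x ≤ t}
      = ∫⁻ t in Set.Ioi 0, ∫⁻ x, (Set.Ici (g x)).indicator F t ∂μ := by
        refine lintegral_congr fun t => ?_
        rw [← lintegral_indicator_const (measurableSet_le hg measurable_const)]
        rfl
    _ = ∫⁻ x, (∫⁻ t in Set.Ioi 0, (Set.Ici (g x)).indicator F t) ∂μ := by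
        refine lintegral_lintegral_swap (Measurable.aemeasurable ?_)
        exact (hF.comp measurable_fst).indicator
          (measurableSet_le (hg.comp measurable_snd) measurable_fst)
    _ = ∫⁻ x, ENNReal.ofReal (exp (-(l * g x)) / l) ∂μ := by
        refine lintegral_congr_ae (hg0.mono fun x hx => ?_)
        have hIoi : (Set.Ici (g x) ∩ Set.Ioi 0 : Set ℝ) =ᵐ[volume] Set.Ioi (g x) := by
          simpa [hx] using
            (Ioi_ae_eq_Ici (μ := volume) (a := g x)).symm.inter (ae_eq_refl (Set.Ioi (0 : ℝ)))
        dsimp only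
        rw [lintegral_indicator measurableSet_Ici, Measure.restrict_restrict measurableSet_Ici,
          Measure.restrict_congr_set hIoi, lintegral_Ioi_exp_neg_mul hl]

theorem integral_Ioi_exp_neg_mul_mul_measureReal_le [IsFiniteMeasure μ] (hg : Measurable g)
    (hg0 : ∀ᵐ x ∂μ, 0 ≤ g x) (hl : 0 < l) :
    ∫ t in Set.Ioi 0, exp (-(l * t)) * μ.real {x | g x ≤ t} =
      (∫ x, exp (-(l * g x)) ∂μ) / l := by
  have hmono : Monotone fun t => μ.real {x | g x ≤ t} :=
    fun s t hst => measureReal_mono fun x hx => le_trans hx hst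
  have hmeas : Measurable fun t => exp (-(l * t)) * μ.real {x | g x ≤ t} :=
    (by fun_prop : Measurable fun t : ℝ => exp (-(l * t))).mul hmono.measurable
  rw [← integral_div,
    integral_eq_lintegral_of_nonneg_ae (ae_of_all _ fun t => by positivity)
      hmeas.aestronglyMeasurable,
    integral_eq_lintegral_of_nonneg_ae (ae_of_all _ fun x => by positivity)
      (by fun_prop : Measurable fun x => exp (-(l * g x)) / l).aestronglyMeasurable,
    ← lintegral_Ioi_exp_neg_mul_mul_measure_le hg hg0 hl]
  congr 1
  refine lintegral_congr fun t => ?_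
  rw [ENNReal.ofReal_mul (exp_pos _).le, ofReal_measureReal]

end Laplace

theorem integral_Icc_exp_neg_mul {b : ℝ} (hb : b ≠ 0) :
    ∫ y in Set.Icc (0 : ℝ) 1, exp (-(b * y)) = (1 - exp (-b)) / b := by
  simp_rw [← neg_mul]
  rw [integral_Icc_eq_integral_Ioc, ← intervalIntegral.integral_of_le zero_le_one,
    intervalIntegral.integral_comp_mul_left (fun y => exp y) (neg_ne_zero.2 hb), integral_exp]
  simp only [mul_zero, mul_one, exp_zero, smul_eq_mul]
  field_simp
  ring

theorem integral_unitCube_exp_neg_sum {ι : Type*} [Fintype ι] {b : ι → ℝ} (hb : ∀ i, b i ≠ 0) :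
    ∫ x in Set.univ.pi fun _ : ι => Set.Icc (0 : ℝ) 1, exp (-∑ i, b i * x i) =
      ∏ i, (1 - exp (-b i)) / b i := by
  simp_rw [← sum_neg_distrib, exp_sum]
  rw [volume_pi, Measure.restrict_pi_pi,
    integral_fintype_prod_eq_prod (fun i y => exp (-(b i * y)))]
  exact prod_congr rfl fun i _ => integral_Icc_exp_neg_mul (hb i)

/-- Laplace transform of `t ↦ vol({x ∈ [0,1]ⁿ : ⟨a,x⟩ ≤ t})` for `a > 0`. -/
theorem laplace_transform_cube_section_volume (n : ℕ) (a : Fin n → ℝ)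
    (ha : ∀ i, 0 < a i)
    (f : ℝ → ℝ)
    (hf : ∀ t, f t = (volume {x : Fin n → ℝ |
        (∀ i, 0 ≤ x i ∧ x i ≤ 1) ∧ ∑ i, a i * x i ≤ t}).toReal)
    (l : ℝ) (hl : 0 < l) :
    ∫ t in Set.Ioi (0 : ℝ), Real.exp (-(l * t)) * f t =
      (∏ i, (1 - Real.exp (-(l * a i)))) / (l ^ (n + 1) * ∏ i, a i) := by
  set cube := Set.univ.pi fun _ : Fin n => Set.Icc (0 : ℝ) 1
  have hcube : MeasurableSet cube := MeasurableSet.univ_pi fun _ => measurableSet_Icc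
  have : IsFiniteMeasure (volume.restrict cube) :=
    isFiniteMeasure_restrict.2 (isCompact_univ_pi fun _ => isCompact_Icc).measure_ne_top
  have hf_restrict : f = fun t => (volume.restrict cube).real {x | ∑ i, a i * x i ≤ t} := by
    ext t
    rw [hf, measureReal_restrict_apply' hcube, measureReal_def]
    congr 2
    ext x
    simp only [cube, Set.mem_ofPred_eq, Set.mem_inter_iff, Set.mem_univ_pi, Set.mem_Icc]
    exact and_comm
  have hsum_nonneg : ∀ᵐ x ∂volume.restrict cube, 0 ≤ ∑ i, a i * x i :=
    ae_restrict_of_forall_mem hcube fun x hx =>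
      sum_nonneg fun i _ => mul_nonneg (ha i).le (hx i (Set.mem_univ i)).1
  rw [hf_restrict, integral_Ioi_exp_neg_mul_mul_measureReal_le (by fun_prop) hsum_nonneg hl]
  simp_rw [mul_sum, ← mul_assoc]
  rw [integral_unitCube_exp_neg_sum fun i => (mul_pos hl (ha i)).ne', prod_div_distrib,
    prod_mul_distrib, prod_const, card_univ, Fintype.card_fin]
  ring
end

section
/- Let a = (a_1, ..., a_n) ∈ ℝ^n with a_i > 0 for all i. Then for every t ≥ 0, the n-dimensional Lebesgue volume of B_a(t) := {x ∈ [0,1]^n : ⟨a, x⟩ ≤ t} equals (1 / (n! · ∏_{i=1}^n a_i)) · Σ_{U ⊆ {1,...,n}} (-1)^{#U} · (t - Σ_{i ∈ U} a_i)_+^n, where the sum runs over all subsets U of {1, ..., n} and #U denotes the cardinality of U. -/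
/-!
The diagonal map `x ↦ (aᵢ xᵢ)ᵢ` carries the set onto the box `∏ [0, aᵢ]` cut by `∑ yᵢ ≤ t`,
which costs the factor `(∏ aᵢ)⁻¹`. Expanding the product of `1_{[0,aᵢ)} = 1_{[0,∞)} - 1_{[aᵢ,∞)}`
writes the indicator of the box as the alternating sum over `U` of the indicators of the
orthants with corner `a · 1_U`. Cut by `∑ yᵢ ≤ t`, such an orthant is a translate of the corner
simplex of size `t - ∑_{i ∈ U} aᵢ`, whose volume `(·)₊ⁿ / n!` follows by slicing off one
coordinate at a time.
-/

open MeasureTheory Finset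

def cornerSimplex (n : ℕ) (c : ℝ) : Set (Fin n → ℝ) :=
  {y | 0 ≤ y ∧ ∑ i, y i ≤ c}

theorem measurableSet_sum_le (n : ℕ) (c : ℝ) : MeasurableSet {y : Fin n → ℝ | ∑ i, y i ≤ c} :=
  measurableSet_le (by fun_prop) measurable_const

theorem measurableSet_cornerSimplex (n : ℕ) (c : ℝ) : MeasurableSet (cornerSimplex n c) :=
  measurableSet_Ici.inter (measurableSet_sum_le n c)

theorem cornerSimplex_eq_empty {n : ℕ} {c : ℝ} (hc : c < 0) : cornerSimplex n c = ∅ :=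
  Set.eq_empty_of_forall_notMem fun _ ⟨hy, hs⟩ =>
    (hs.trans_lt hc).not_ge (sum_nonneg fun i _ => hy i)

theorem cons_mem_cornerSimplex {n : ℕ} {c x : ℝ} {y : Fin n → ℝ} :
    Fin.cons x y ∈ cornerSimplex (n + 1) c ↔ 0 ≤ x ∧ y ∈ cornerSimplex n (c - x) := by
  simp only [cornerSimplex, Set.mem_ofPred_eq, Fin.le_cons, Fin.sum_cons, le_sub_iff_add_le',
    and_assoc]
  rfl

theorem volume_eq_lintegral_volume_cons {α : Type*} [MeasureSpace α]
    [SigmaFinite (volume : Measure α)] {n : ℕ} {s : Set (Fin (n + 1) → α)}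
    (hs : MeasurableSet s) :
    volume s = ∫⁻ x, volume {y : Fin n → α | Fin.cons x y ∈ s} := by
  rw [← ((volume_preserving_piFinSuccAbove (fun _ : Fin (n + 1) => α) 0).symm _).measure_preimage
    hs.nullMeasurableSet, Measure.volume_eq_prod, Measure.prod_apply (hs.preimage (by fun_prop))]
  simp only [MeasurableEquiv.piFinSuccAbove_symm_apply, Fin.insertNthEquiv_zero]
  rfl

theorem integral_sub_pow_div_factorial (n : ℕ) (c : ℝ) :
    ∫ x in (0 : ℝ)..c, (c - x) ^ n / n.factorial = c ^ (n + 1) / (n + 1).factorial := by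
  rw [intervalIntegral.integral_div, intervalIntegral.integral_comp_sub_left (fun x => x ^ n),
    integral_pow, Nat.factorial_succ]
  push_cast
  field_simp
  ring

theorem volume_cornerSimplex (n : ℕ) {c : ℝ} (hc : 0 ≤ c) :
    volume (cornerSimplex n c) = ENNReal.ofReal (c ^ n / n.factorial) := by
  induction n generalizing c with
  | zero =>
    have : cornerSimplex 0 c = Set.univ :=
      Set.eq_univ_of_forall fun _ => ⟨finZeroElim, by simpa using hc⟩
    simp [this, Measure.volume_pi_eq_dirac (α := fun _ => ℝ), measure_univ]
  | succ n ih =>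
    have slice (x : ℝ) : volume {y | Fin.cons x y ∈ cornerSimplex (n + 1) c} =
        (Set.Icc 0 c).indicator (fun x => ENNReal.ofReal ((c - x) ^ n / n.factorial)) x := by
      simp only [cons_mem_cornerSimplex]
      by_cases hx : 0 ≤ x
      · rcases le_or_gt x c with hxc | hxc
        · simp [hx, hxc, ih (sub_nonneg.2 hxc)]
        · simp [hx, hxc.not_ge, cornerSimplex_eq_empty (sub_neg.2 hxc)]
      · simp [hx]
    have hint : IntegrableOn (fun x => (c - x) ^ n / n.factorial) (Set.Icc 0 c) :=
      Continuous.integrableOn_Icc (by fun_prop)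
    rw [volume_eq_lintegral_volume_cons (measurableSet_cornerSimplex _ _), funext slice,
      lintegral_indicator measurableSet_Icc, ← ofReal_integral_eq_lintegral_ofReal hint,
      integral_Icc_eq_integral_Ioc, ← intervalIntegral.integral_of_le hc,
      integral_sub_pow_div_factorial]
    exact ae_restrict_of_forall_mem measurableSet_Icc fun x hx => by
      have := sub_nonneg.2 hx.2
      positivity

theorem volume_cornerSimplex_ne_top (n : ℕ) (c : ℝ) : volume (cornerSimplex n c) ≠ ⊤ := by
  rcases lt_or_ge c 0 with hc | hc
  · simp [cornerSimplex_eq_empty hc]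
  · simp [volume_cornerSimplex n hc]

theorem measureReal_cornerSimplex {n : ℕ} {c : ℝ} (h : 0 ≤ c ∨ n ≠ 0) :
    volume.real (cornerSimplex n c) = max c 0 ^ n / n.factorial := by
  rcases le_or_gt 0 c with hc | hc
  · rw [measureReal_def, volume_cornerSimplex n hc, max_eq_left hc,
      ENNReal.toReal_ofReal (by positivity)]
  · simp [cornerSimplex_eq_empty hc, max_eq_right hc.le, h.resolve_left hc.not_ge]

theorem volume_Ici_inter_sum_le {n : ℕ} (v : Fin n → ℝ) (t : ℝ) :
    volume (Set.Ici v ∩ {y | ∑ i, y i ≤ t}) = volume (cornerSimplex n (t - ∑ i, v i)) := by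
  rw [← measure_preimage_add _ v]
  congr 1
  ext y
  simp [cornerSimplex, sum_add_distrib, le_sub_iff_add_le']

theorem indicator_Ico_eq_sub {a : ℝ} (ha : 0 ≤ a) (x : ℝ) :
    (Set.Ico 0 a).indicator (1 : ℝ → ℝ) x =
      (Set.Ici 0).indicator 1 x - (Set.Ici a).indicator 1 x := by
  rw [← Set.Ici_sdiff_Ici, Set.indicator_sdiff (Set.Ici_subset_Ici.2 ha)]
  rfl

theorem indicator_pi_Ico_eq_sum_indicator_Ici {n : ℕ} {a : Fin n → ℝ} (ha : ∀ i, 0 ≤ a i)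
    (y : Fin n → ℝ) :
    (Set.univ.pi fun i => Set.Ico 0 (a i)).indicator 1 y =
      ∑ U : Finset (Fin n), (-1 : ℝ) ^ U.card * (Set.Ici (U.piecewise a 0)).indicator 1 y := by
  classical
  rw [← coe_univ, Set.indicator_pi_one_apply]
  simp only [indicator_Ico_eq_sub (ha _), prod_sub, powerset_univ]
  refine sum_congr rfl fun U _ => ?_
  rw [← Set.pi_univ_Ici, ← coe_univ, Set.indicator_pi_one_apply,
    ← prod_sdiff (subset_univ U), mul_assoc]
  congr 2
  · exact prod_congr rfl fun i hi => by rw [piecewise_eq_of_notMem _ _ _ (mem_sdiff.1 hi).2]; rfl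
  · exact prod_congr rfl fun i hi => by rw [piecewise_eq_of_mem _ _ _ hi]

theorem measureReal_eq_sum_of_indicator_eq {α ι : Type*} [MeasurableSpace α] [Fintype ι]
    {μ : Measure α} {s : Set α} {t : ι → Set α} (c : ι → ℝ) (hs : MeasurableSet s)
    (ht : ∀ i, MeasurableSet (t i)) (hfin : ∀ i, μ (t i) ≠ ⊤)
    (h : ∀ x, s.indicator 1 x = ∑ i, c i * (t i).indicator 1 x) :
    μ.real s = ∑ i, c i * μ.real (t i) := by
  have hint (i : ι) : Integrable ((t i).indicator (1 : α → ℝ)) μ :=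
    (integrable_indicator_iff (ht i)).2 (integrableOn_const (hfin i))
  rw [← integral_indicator_one hs, funext h, integral_finsetSum _ fun i _ => (hint i).const_mul _]
  simp_rw [integral_const_mul, integral_indicator_one (ht _)]

theorem measureReal_pi_Ico_inter_sum_le {n : ℕ} {a : Fin n → ℝ} (ha : ∀ i, 0 ≤ a i) (t : ℝ) :
    volume.real ((Set.univ.pi fun i => Set.Ico 0 (a i)) ∩ {y | ∑ i, y i ≤ t}) =
      ∑ U : Finset (Fin n), (-1 : ℝ) ^ U.card *
        volume.real (cornerSimplex n (t - ∑ i ∈ U, a i)) := by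
  classical
  have hsum (U : Finset (Fin n)) : ∑ i, U.piecewise a 0 i = ∑ i ∈ U, a i := by
    simp [sum_piecewise]
  simp_rw [← hsum, measureReal_def, ← volume_Ici_inter_sum_le, ← measureReal_def]
  refine measureReal_eq_sum_of_indicator_eq _
    ((MeasurableSet.univ_pi fun _ => measurableSet_Ico).inter (measurableSet_sum_le n t))
    (fun U => measurableSet_Ici.inter (measurableSet_sum_le n t))
    (fun U => by rw [volume_Ici_inter_sum_le]; exact volume_cornerSimplex_ne_top _ _) fun y => ?_
  simp_rw [Set.inter_indicator_one, Pi.mul_apply, indicator_pi_Ico_eq_sum_indicator_Ici ha,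
    sum_mul, mul_assoc]

theorem volume_cube_section_eq_inv_prod_mul {n : ℕ} {a : Fin n → ℝ} (ha : ∀ i, 0 < a i)
    (t : ℝ) :
    volume {x : Fin n → ℝ | (∀ i, 0 ≤ x i ∧ x i ≤ 1) ∧ ∑ i, a i * x i ≤ t} =
      ENNReal.ofReal (∏ i, a i)⁻¹ *
        volume ((Set.univ.pi fun i => Set.Icc 0 (a i)) ∩ {y | ∑ i, y i ≤ t}) := by
  set L := Matrix.toLin' (Matrix.diagonal a)
  have hdet : LinearMap.det L = ∏ i, a i := by
    rw [LinearMap.det_toLin', Matrix.det_diagonal]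
  have hL (x : Fin n → ℝ) (i : Fin n) : L x i = a i * x i := by
    simp [L, Matrix.mulVec_diagonal]
  have hpre : {x : Fin n → ℝ | (∀ i, 0 ≤ x i ∧ x i ≤ 1) ∧ ∑ i, a i * x i ≤ t} =
      L ⁻¹' ((Set.univ.pi fun i => Set.Icc 0 (a i)) ∩ {y | ∑ i, y i ≤ t}) := by
    ext x
    simp only [Set.mem_ofPred_eq, Set.mem_preimage, Set.mem_inter_iff, Set.mem_univ_pi,
      Set.mem_Icc, hL, mul_nonneg_iff_of_pos_left (ha _), mul_le_iff_le_one_right (ha _)]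
  have hprod : 0 < ∏ i, a i := prod_pos fun i _ => ha i
  rw [hpre, Measure.addHaar_preimage_linearMap _ (hdet ▸ hprod.ne'), hdet,
    abs_of_pos (inv_pos.2 hprod)]

/-- Marichal–Mossinghof formula: the volume of the section
`{x ∈ [0,1]ⁿ : ⟨a,x⟩ ≤ t}` of the unit hypercube, for `a > 0`, equals
`(1/(n! ∏ᵢ aᵢ)) ∑_{U ⊆ {1,…,n}} (-1)^{#U} (t - ∑_{i ∈ U} aᵢ)₊ⁿ`. -/
theorem volume_cube_section (n : ℕ) (a : Fin n → ℝ) (ha : ∀ i, 0 < a i)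
    (t : ℝ) (ht : 0 ≤ t) :
    (volume {x : Fin n → ℝ |
        (∀ i, 0 ≤ x i ∧ x i ≤ 1) ∧ ∑ i, a i * x i ≤ t}).toReal =
      (1 / (n.factorial * ∏ i, a i)) *
        ∑ U : Finset (Fin n), (-1 : ℝ) ^ U.card * max (t - ∑ i ∈ U, a i) 0 ^ n := by
  have hbox : ((Set.univ.pi fun i => Set.Ico 0 (a i)) ∩ {y | ∑ i, y i ≤ t} : Set (Fin n → ℝ))
      =ᵐ[volume] ((Set.univ.pi fun i => Set.Icc 0 (a i)) ∩ {y | ∑ i, y i ≤ t} : Set _) :=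
    ae_eq_set_inter Measure.pi_Ico_ae_eq_pi_Icc (ae_eq_refl _)
  have hterm (U : Finset (Fin n)) : 0 ≤ t - ∑ i ∈ U, a i ∨ n ≠ 0 := by
    rcases n.eq_zero_or_pos with rfl | hn
    · simp [Subsingleton.elim U ∅, ht]
    · exact .inr hn.ne'
  rw [volume_cube_section_eq_inv_prod_mul ha, ← measure_congr hbox, ENNReal.toReal_mul,
    ENNReal.toReal_ofReal (inv_nonneg.2 (prod_pos fun i _ => ha i).le), ← measureReal_def,
    measureReal_pi_Ico_inter_sum_le fun i => (ha i).le, mul_sum, mul_sum]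
  refine sum_congr rfl fun U _ => ?_
  rw [measureReal_cornerSimplex (hterm U)]
  field_simp
end

section
/- Let a = (a_1, ..., a_n) ∈ ℝ^n, set a_0 := 0, assume a_i ≠ a_j for every pair of distinct indices i, j ∈ {0, 1, ..., n}, and assume a_i < 0 for at least one i. Let t* := min_{0 ≤ i ≤ n} a_i (so t* < 0), and let f(t) denote the n-dimensional Lebesgue volume of Θ(a,t) := Δ ∩ {x : ⟨a, x⟩ ≤ t}, and g(t) := f(t + t*). Then for every real λ > 0, ∫_0^∞ exp(-λ t) g(t) dt = Σ_{i=0}^{n} exp(-λ (a_i - t*)) / (λ^{n+1} · ∏_{j ≠ i, 0 ≤ j ≤ n} (a_j - a_i)). -/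
/-!
Tonelli turns the Laplace transform of `t ↦ vol (Δ ∩ {⟨a, x⟩ - t* ≤ t})` into
`λ⁻¹ ∫_Δ exp (-λ (⟨a, x⟩ - t*)) dx`, because `⟨a, ·⟩ - t* ≥ 0` on `Δ`. On `Δ` the exponent is
the affine function with value `-λ aᵢ` at the `i`-th vertex, and for such exponents the
Hermite–Genocchi formula evaluates `∫_Δ exp` as the divided difference of `exp` at the vertex
values. That formula follows by induction on `n`: integrating out the first coordinate yields
exactly the recursion `φ[b₀, …, bₙ₊₁] = (φ[b₁, b₂, …] - φ[b₀, b₂, …]) / (b₁ - b₀)`.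
-/

open MeasureTheory Finset Real

theorem Fin.prod_univ_erase_succAbove {M : Type*} [CommMonoid M] {n : ℕ} (f : Fin (n + 2) → M)
    (p : Fin (n + 2)) (k : Fin (n + 1)) :
    ∏ j ∈ univ.erase (p.succAbove k), f j = f p * ∏ j ∈ univ.erase k, f (p.succAbove j) := by
  rw [← mul_prod_erase _ f (mem_erase.2 ⟨(p.succAbove_ne k).symm, mem_univ p⟩),
    ← prod_image (fun i _ j _ h => p.succAbove_right_injective h)]
  congr 2
  ext j
  simp only [mem_image, mem_erase, mem_univ, and_true]
  constructor
  · rintro ⟨hjp, hjk⟩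
    obtain ⟨i, rfl⟩ := Fin.exists_succAbove_eq hjp
    exact ⟨i, fun h => hjk (h ▸ rfl), rfl⟩
  · rintro ⟨i, hik, rfl⟩
    exact ⟨p.succAbove_ne i, fun h => hik (p.succAbove_right_injective h)⟩

section DividedDifference

variable {K : Type*} [Field K]

/-- The divided difference `φ[b₀, …, bₙ]`, in Lagrange's closed form. -/
def divDiff (φ : K → K) {n : ℕ} (b : Fin (n + 1) → K) : K :=
  ∑ i, φ (b i) / ∏ j ∈ univ.erase i, (b i - b j)

theorem divDiff_comp_succAbove {φ : K → K} {n : ℕ} {b : Fin (n + 2) → K}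
    (hb : Function.Injective b) (p : Fin (n + 2)) :
    divDiff φ (b ∘ p.succAbove) =
      ∑ i, φ (b i) * (b i - b p) / ∏ j ∈ univ.erase i, (b i - b j) := by
  rw [p.sum_univ_succAbove, sub_self, mul_zero, zero_div, zero_add, divDiff]
  refine sum_congr rfl fun k _ => ?_
  have hk : b (p.succAbove k) - b p ≠ 0 := sub_ne_zero.2 (hb.ne (p.succAbove_ne k))
  rw [Fin.prod_univ_erase_succAbove, ← mul_div_mul_right _ _ hk]
  simp only [Function.comp_apply]
  ring

theorem divDiff_succ {φ : K → K} {n : ℕ} {b : Fin (n + 2) → K} (hb : Function.Injective b) :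
    divDiff φ b =
      (divDiff φ (b ∘ Fin.succAbove 0) - divDiff φ (b ∘ Fin.succAbove 1)) / (b 1 - b 0) := by
  have h10 : b 1 - b 0 ≠ 0 := sub_ne_zero.2 (hb.ne Fin.zero_ne_one.symm)
  rw [eq_div_iff h10, divDiff_comp_succAbove hb, divDiff_comp_succAbove hb, ← sum_sub_distrib,
    divDiff, sum_mul]
  refine sum_congr rfl fun i _ => ?_
  ring

theorem divDiff_neg_mul (φ : K → K) {n : ℕ} (c : K) (b : Fin (n + 1) → K) :
    divDiff φ (fun i => -c * b i) =
      ∑ i, φ (-c * b i) / (c ^ n * ∏ j ∈ univ.erase i, (b j - b i)) := by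
  refine sum_congr rfl fun i _ => ?_
  have hfac : ∀ j, -c * b i - -c * b j = c * (b j - b i) := fun j => by ring
  rw [prod_congr rfl fun j _ => hfac j, prod_mul_distrib, prod_const,
    card_erase_of_mem (mem_univ i), card_univ, Fintype.card_fin, Nat.add_sub_cancel]

end DividedDifference

def solidSimplex (ι : Type*) [Fintype ι] : Set (ι → ℝ) := {x | (∀ i, 0 ≤ x i) ∧ ∑ i, x i ≤ 1}

section SolidSimplex

variable {ι : Type*} [Fintype ι]

theorem isClosed_solidSimplex : IsClosed (solidSimplex ι) := by
  simp only [solidSimplex, Set.ofPred_and, Set.ofPred_forall]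
  exact (isClosed_iInter fun i => isClosed_le continuous_const (continuous_apply i)).inter
    (isClosed_le (continuous_finsetSum _ fun i _ => continuous_apply i) continuous_const)

theorem solidSimplex_subset_Icc : solidSimplex ι ⊆ Set.Icc 0 1 := fun _ ⟨hx0, hx1⟩ =>
  ⟨hx0, fun i => (single_le_sum (fun j _ => hx0 j) (mem_univ i)).trans hx1⟩

theorem isCompact_solidSimplex : IsCompact (solidSimplex ι) :=
  isCompact_Icc.of_isClosed_subset isClosed_solidSimplex solidSimplex_subset_Icc

theorem measurableSet_solidSimplex : MeasurableSet (solidSimplex ι) :=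
  isClosed_solidSimplex.measurableSet

end SolidSimplex

theorem cons_mem_solidSimplex {n : ℕ} {s : ℝ} {y : Fin n → ℝ} :
    Fin.cons s y ∈ solidSimplex (Fin (n + 1)) ↔
      y ∈ solidSimplex (Fin n) ∧ s ∈ Set.Icc 0 (1 - ∑ i, y i) := by
  simp only [solidSimplex, Set.mem_ofPred_eq, Fin.forall_fin_succ, Fin.cons_zero, Fin.cons_succ,
    Fin.sum_cons, Set.mem_Icc]
  constructor
  · rintro ⟨⟨hs, hy⟩, h⟩
    exact ⟨⟨hy, by linarith [sum_nonneg fun i (_ : i ∈ univ) => hy i]⟩, hs, by linarith⟩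
  · rintro ⟨⟨hy, -⟩, hs, h⟩
    exact ⟨⟨hs, hy⟩, by linarith⟩

theorem setIntegral_solidSimplex_succ {E : Type*} [NormedAddCommGroup E] [NormedSpace ℝ E]
    {n : ℕ} {F : (Fin (n + 1) → ℝ) → E} (hF : IntegrableOn F (solidSimplex (Fin (n + 1)))) :
    ∫ x in solidSimplex (Fin (n + 1)), F x =
      ∫ y in solidSimplex (Fin n), ∫ s in (0)..(1 - ∑ i, y i), F (Fin.cons s y) := by
  set e := (MeasurableEquiv.piFinSuccAbove (fun _ : Fin (n + 1) => ℝ) 0).symm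
  have he : MeasurePreserving e (volume.prod volume) volume :=
    (volume_preserving_piFinSuccAbove (fun _ : Fin (n + 1) => ℝ) 0).symm
  have he_apply : ∀ p : ℝ × (Fin n → ℝ), e p = Fin.cons p.1 p.2 := fun p =>
    Fin.insertNth_zero' p.1 p.2
  have hslice : ∀ p : ℝ × (Fin n → ℝ),
      (e ⁻¹' solidSimplex (Fin (n + 1))).indicator (fun p => F (e p)) p =
      (solidSimplex (Fin n)).indicator
        (fun y => (Set.Icc 0 (1 - ∑ i, y i)).indicator (fun s => F (Fin.cons s y)) p.1) p.2 := by
    rintro ⟨s, y⟩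
    have hmem : (s, y) ∈ e ⁻¹' solidSimplex (Fin (n + 1)) ↔
        y ∈ solidSimplex (Fin n) ∧ s ∈ Set.Icc 0 (1 - ∑ i, y i) := by
      rw [Set.mem_preimage, he_apply]
      exact cons_mem_solidSimplex
    simp only [Set.indicator, hmem, he_apply]
    split_ifs <;> tauto
  have hint : IntegrableOn (fun p => F (e p)) (e ⁻¹' solidSimplex (Fin (n + 1))) :=
    (he.integrableOn_comp_preimage e.measurableEmbedding).2 hF
  rw [← he.setIntegral_preimage_emb e.measurableEmbedding,
    ← integral_indicator (e.measurable measurableSet_solidSimplex),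
    integral_prod_symm _
      ((integrable_indicator_iff (e.measurable measurableSet_solidSimplex)).2 hint),
    ← integral_indicator measurableSet_solidSimplex]
  refine integral_congr_ae (Filter.Eventually.of_forall fun y => ?_)
  simp only [hslice]
  by_cases hy : y ∈ solidSimplex (Fin n)
  · simp only [Set.indicator_of_mem hy]
    rw [integral_indicator measurableSet_Icc, integral_Icc_eq_integral_Ioc,
      intervalIntegral.integral_of_le (sub_nonneg.2 hy.2)]
  · simp only [Set.indicator_of_notMem hy, integral_zero]

/-- The affine function on `ℝⁿ` with value `b 0` at the origin and `b (i + 1)` at the `i`-th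
basis vector, i.e. at the vertices of `solidSimplex (Fin n)`. -/
def affineInterp {n : ℕ} (b : Fin (n + 1) → ℝ) (x : Fin n → ℝ) : ℝ :=
  (1 - ∑ i, x i) * b 0 + ∑ i, x i * b i.succ

section AffineInterp

variable {n : ℕ}

theorem continuous_affineInterp (b : Fin (n + 1) → ℝ) : Continuous (affineInterp b) := by
  unfold affineInterp
  fun_prop

theorem integrableOn_exp_affineInterp (b : Fin (n + 1) → ℝ) :
    IntegrableOn (fun x => exp (affineInterp b x)) (solidSimplex (Fin n)) :=
  (continuous_affineInterp b).rexp.continuousOn.integrableOn_compact isCompact_solidSimplex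

theorem affineInterp_const_mul (c : ℝ) (b : Fin (n + 1) → ℝ) (x : Fin n → ℝ) :
    affineInterp (fun i => c * b i) x = c * affineInterp b x := by
  rw [affineInterp, affineInterp, mul_add, mul_sum]
  congr 1
  · ring
  · exact sum_congr rfl fun i _ => by ring

theorem affineInterp_cons_zero (a x : Fin n → ℝ) :
    affineInterp (Fin.cons 0 a) x = ∑ i, a i * x i := by
  simp [affineInterp, mul_comm]

theorem le_affineInterp {b : Fin (n + 1) → ℝ} {m : ℝ} (hm : ∀ i, m ≤ b i) {x : Fin n → ℝ}
    (hx : x ∈ solidSimplex (Fin n)) : m ≤ affineInterp b x := by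
  have h : (1 - ∑ i, x i) * m + ∑ i, x i * m ≤ affineInterp b x :=
    add_le_add (mul_le_mul_of_nonneg_left (hm 0) (sub_nonneg.2 hx.2))
      (sum_le_sum fun i _ => mul_le_mul_of_nonneg_left (hm i.succ) (hx.1 i))
  rwa [← sum_mul, ← add_mul, sub_add_cancel, one_mul] at h

theorem affineInterp_cons (b : Fin (n + 2) → ℝ) (s : ℝ) (y : Fin n → ℝ) :
    affineInterp b (Fin.cons s y) = affineInterp (b ∘ Fin.succAbove 1) y + s * (b 1 - b 0) := by
  simp only [affineInterp, Fin.sum_univ_succ, Fin.cons_zero, Fin.cons_succ, Fin.succ_zero_eq_one,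
    Function.comp_apply, Fin.succAbove_ne_zero_zero one_ne_zero, Fin.one_succAbove_succ]
  ring

theorem affineInterp_comp_succAbove_zero (b : Fin (n + 2) → ℝ) (y : Fin n → ℝ) :
    affineInterp (b ∘ Fin.succAbove 0) y =
      affineInterp (b ∘ Fin.succAbove 1) y + (1 - ∑ i, y i) * (b 1 - b 0) := by
  simp only [affineInterp, Fin.succAbove_zero, Function.comp_apply, Fin.succ_zero_eq_one,
    Fin.succAbove_ne_zero_zero one_ne_zero, Fin.one_succAbove_succ]
  ring

end AffineInterp

theorem integral_exp_add_mul {c d : ℝ} (hd : d ≠ 0) (r : ℝ) :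
    ∫ s in (0)..r, exp (c + s * d) = (exp (c + r * d) - exp c) / d := by
  have hderiv : ∀ s ∈ Set.uIcc 0 r,
      HasDerivAt (fun s => exp (c + s * d) / d) (exp (c + s * d)) s := by
    intro s _
    have h := (((hasDerivAt_id s).mul_const d).const_add c).exp.div_const d
    rwa [id, one_mul, mul_div_cancel_right₀ _ hd] at h
  rw [intervalIntegral.integral_eq_sub_of_hasDerivAt hderiv
    (Continuous.intervalIntegrable (by fun_prop) _ _)]
  simp [sub_div]

theorem integral_exp_affineInterp_solidSimplex {n : ℕ} {b : Fin (n + 1) → ℝ}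
    (hb : Function.Injective b) :
    ∫ x in solidSimplex (Fin n), exp (affineInterp b x) = divDiff exp b := by
  induction n with
  | zero =>
    have huniv : solidSimplex (Fin 0) = Set.univ := by ext x; simp [solidSimplex]
    simp [huniv, divDiff, affineInterp, measureReal_def, volume_pi]
  | succ n ih =>
    have h10 : b 1 - b 0 ≠ 0 := sub_ne_zero.2 (hb.ne Fin.zero_ne_one.symm)
    have hslice : ∀ y : Fin n → ℝ,
        ∫ s in (0)..(1 - ∑ i, y i), exp (affineInterp b (Fin.cons s y)) =
          (exp (affineInterp (b ∘ Fin.succAbove 0) y) -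
            exp (affineInterp (b ∘ Fin.succAbove 1) y)) / (b 1 - b 0) := fun y => by
      simp only [affineInterp_cons, integral_exp_add_mul h10, affineInterp_comp_succAbove_zero]
    rw [setIntegral_solidSimplex_succ (integrableOn_exp_affineInterp b),
      integral_congr_ae (Filter.Eventually.of_forall hslice), integral_div,
      integral_sub (integrableOn_exp_affineInterp _) (integrableOn_exp_affineInterp _),
      ih (hb.comp Fin.succAbove_right_injective), ih (hb.comp Fin.succAbove_right_injective),
      divDiff_succ hb]

theorem lintegral_Ioi_indicator_Ici_exp_neg_mul {c l : ℝ} (hc : 0 ≤ c) (hl : 0 < l) :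
    ∫⁻ t in Set.Ioi 0, (Set.Ici c).indicator (fun t => ENNReal.ofReal (exp (-(l * t)))) t =
      ENNReal.ofReal (exp (-(l * c)) / l) := by
  have hset : (Set.Ici c ∩ Set.Ioi 0 : Set ℝ) =ᵐ[volume] Set.Ioi c := by
    have h := (Ioi_ae_eq_Ici (μ := volume) (a := c)).symm.inter
      (Filter.EventuallyEq.refl _ (Set.Ioi (0 : ℝ)))
    rwa [Set.Ioi_inter_Ioi, sup_eq_left.2 hc] at h
  rw [lintegral_indicator measurableSet_Ici, Measure.restrict_restrict measurableSet_Ici,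
    setLIntegral_congr hset, ← ofReal_integral_eq_lintegral_ofReal]
  · simp_rw [← neg_mul]
    rw [integral_exp_mul_Ioi (neg_lt_zero.2 hl), neg_div_neg_eq]
  · have h := exp_neg_integrableOn_Ioi c hl
    simp only [neg_mul] at h
    exact h
  · exact Filter.Eventually.of_forall fun t => (exp_pos _).le

theorem lintegral_exp_neg_mul_measure_sublevel {X : Type*} [MeasurableSpace X] (μ : Measure X)
    [SFinite μ] {S : Set X} (hS : MeasurableSet S) {u : X → ℝ} (hu : Measurable u)
    (hu0 : ∀ x ∈ S, 0 ≤ u x) {l : ℝ} (hl : 0 < l) :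
    ∫⁻ t in Set.Ioi 0, ENNReal.ofReal (exp (-(l * t))) * μ (S ∩ {x | u x ≤ t}) =
      ∫⁻ x in S, ENNReal.ofReal (exp (-(l * u x)) / l) ∂μ := by
  set F : ℝ × X → ENNReal :=
    {p | u p.2 ≤ p.1}.indicator fun p => ENNReal.ofReal (exp (-(l * p.1)))
  have hF : Measurable F := (by fun_prop : Measurable fun p : ℝ × X =>
    ENNReal.ofReal (exp (-(l * p.1)))).indicator
      (measurableSet_le (hu.comp measurable_snd) measurable_fst)
  calc ∫⁻ t in Set.Ioi 0, ENNReal.ofReal (exp (-(l * t))) * μ (S ∩ {x | u x ≤ t})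
      = ∫⁻ t in Set.Ioi 0, ∫⁻ x in S, F (t, x) ∂μ := by
        refine lintegral_congr fun t => ?_
        have hmeas : MeasurableSet {x | u x ≤ t} := measurableSet_le hu measurable_const
        rw [Set.inter_comm, ← Measure.restrict_apply hmeas, ← lintegral_indicator_const hmeas]
        rfl
    _ = ∫⁻ x in S, (∫⁻ t in Set.Ioi 0, F (t, x)) ∂μ := lintegral_lintegral_swap hF.aemeasurable
    _ = ∫⁻ x in S, ENNReal.ofReal (exp (-(l * u x)) / l) ∂μ := by
        refine setLIntegral_congr_fun hS fun x hx => ?_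
        rw [← lintegral_Ioi_indicator_Ici_exp_neg_mul (hu0 x hx) hl]
        rfl

theorem integral_exp_neg_mul_measureReal_sublevel {X : Type*} [MeasurableSpace X]
    (μ : Measure X) [SFinite μ] {S : Set X} (hS : MeasurableSet S) (hμS : μ S ≠ ⊤)
    {u : X → ℝ} (hu : Measurable u) (hu0 : ∀ x ∈ S, 0 ≤ u x) {l : ℝ} (hl : 0 < l) :
    ∫ t in Set.Ioi 0, exp (-(l * t)) * μ.real (S ∩ {x | u x ≤ t}) =
      ∫ x in S, exp (-(l * u x)) / l ∂μ := by
  have hfin : ∀ t, μ (S ∩ {x | u x ≤ t}) ≠ ⊤ := fun t =>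
    ne_top_of_le_ne_top hμS (measure_mono Set.inter_subset_left)
  have hmono : Monotone fun t => μ.real (S ∩ {x | u x ≤ t}) := fun s t hst =>
    measureReal_mono (Set.inter_subset_inter_right _ fun x hx => le_trans hx hst) (hfin t)
  rw [integral_eq_lintegral_of_nonneg_ae, integral_eq_lintegral_of_nonneg_ae,
    ← lintegral_exp_neg_mul_measure_sublevel μ hS hu hu0 hl]
  · congr 1
    refine lintegral_congr fun t => ?_
    rw [ENNReal.ofReal_mul (exp_pos _).le, measureReal_def, ENNReal.ofReal_toReal (hfin t)]
  · exact Filter.Eventually.of_forall fun x => div_nonneg (exp_pos _).le hl.le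
  · exact (by fun_prop : Measurable fun x => exp (-(l * u x)) / l).aestronglyMeasurable
  · exact Filter.Eventually.of_forall fun t => mul_nonneg (exp_pos _).le measureReal_nonneg
  · exact ((by fun_prop : Measurable fun t : ℝ => exp (-(l * t))).mul
      hmono.measurable).aestronglyMeasurable

theorem laplace_transform_shifted_section_volume_general (n : ℕ) (a : Fin n → ℝ)
    (A : Fin (n + 1) → ℝ) (hA : A = Fin.cons 0 a)
    (hdist : ∀ i j : Fin (n + 1), i ≠ j → A i ≠ A j)
    (tstar : ℝ) (htstar : tstar = univ.inf' univ_nonempty A)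
    (f g : ℝ → ℝ)
    (hf : ∀ t, f t = (volume {x : Fin n → ℝ |
        ((∀ i, 0 ≤ x i) ∧ ∑ i, x i ≤ 1) ∧ ∑ i, a i * x i ≤ t}).toReal)
    (hg : ∀ t, g t = f (t + tstar))
    (l : ℝ) (hl : 0 < l) :
    ∫ t in Set.Ioi (0 : ℝ), Real.exp (-(l * t)) * g t =
      ∑ i : Fin (n + 1),
        Real.exp (-(l * (A i - tstar))) /
          (l ^ (n + 1) * ∏ j ∈ univ.erase i, (A j - A i)) := by
  have hg_vol : ∀ t,
      g t = volume.real (solidSimplex (Fin n) ∩ {x | affineInterp A x - tstar ≤ t}) := by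
    intro t
    simp only [hg, hf, measureReal_def, hA, affineInterp_cons_zero, sub_le_iff_le_add]
    rfl
  have hu0 : ∀ x ∈ solidSimplex (Fin n), 0 ≤ affineInterp A x - tstar := fun x hx =>
    sub_nonneg.2 (le_affineInterp (fun i => htstar ▸ inf'_le _ (mem_univ i)) hx)
  have hb : Function.Injective fun i => -l * A i := fun i j h => by
    by_contra hij
    exact hdist i j hij (mul_left_cancel₀ (neg_ne_zero.2 hl.ne') h)
  have hexp : ∀ x, exp (-(l * (affineInterp A x - tstar))) / l =
      exp (l * tstar) / l * exp (affineInterp (fun i => -l * A i) x) := fun x => by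
    rw [affineInterp_const_mul, div_mul_eq_mul_div, ← exp_add]
    congr 2
    ring
  simp_rw [hg_vol]
  rw [integral_exp_neg_mul_measureReal_sublevel volume measurableSet_solidSimplex
      isCompact_solidSimplex.measure_lt_top.ne ((continuous_affineInterp A).measurable.sub_const _)
      hu0 hl]
  simp_rw [hexp]
  rw [integral_const_mul, integral_exp_affineInterp_solidSimplex hb, divDiff_neg_mul, mul_sum]
  refine sum_congr rfl fun i _ => ?_
  rw [div_mul_div_comm, ← exp_add]
  congr 1
  · congr 1
    ring
  · ring

/-- Laplace transform of the shifted volume function `g(t) = f(t + t*)`, where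
`f(t) = vol(Δ ∩ {x : ⟨a,x⟩ ≤ t})`, the weights `a₀ := 0, a₁, …, aₙ` are
pairwise distinct, at least one of them is negative, and
`t* = min₀≤ᵢ≤ₙ aᵢ`. -/
theorem laplace_transform_shifted_section_volume (n : ℕ) (a : Fin n → ℝ)
    (A : Fin (n + 1) → ℝ) (hA : A = Fin.cons 0 a)
    (hdist : ∀ i j : Fin (n + 1), i ≠ j → A i ≠ A j)
    (hneg : ∃ i, a i < 0)
    (tstar : ℝ) (htstar : tstar = univ.inf' univ_nonempty A)
    (f g : ℝ → ℝ)
    (hf : ∀ t, f t = (volume {x : Fin n → ℝ |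
        ((∀ i, 0 ≤ x i) ∧ ∑ i, x i ≤ 1) ∧ ∑ i, a i * x i ≤ t}).toReal)
    (hg : ∀ t, g t = f (t + tstar))
    (l : ℝ) (hl : 0 < l) :
    ∫ t in Set.Ioi (0 : ℝ), Real.exp (-(l * t)) * g t =
      ∑ i : Fin (n + 1),
        Real.exp (-(l * (A i - tstar))) /
          (l ^ (n + 1) * ∏ j ∈ univ.erase i, (A j - A i)) :=
  laplace_transform_shifted_section_volume_general n a A hA hdist tstar htstar f g hf hg l hl
end
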